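/- arXiv:1005.2361 — 3 statements merged into one kernel-verified Lean document; each statement's English description precedes it below -/
import Mathlib

section
/- Let a : ℝ → ℝ³ × ℝ, a(τ) = (𝐚(τ), a⁰(τ)), be differentiable at τ. Then lim_{h→0} (2(1 − e^{-|𝐚(τ+h) − 𝐚(τ)|²/2 + (a⁰(τ+h) − a⁰(τ))²/2}))/h² = |𝐚'(τ)|² − (a⁰'(τ))². (Since 2(1 − e^{-|𝐚−𝐛|²/2 + (a⁰−b⁰)²/2}) is the squared H_η-distance ‖δ⁴_a − δ⁴_b‖²_{H_η} between the delta functions at a and b, this shows that the indefinite metric on H induces the Minkowski metric of signature (+,+,+,−) on the submanifold M₄ of delta functions, i.e., the embedding of Minkowski space-time is isometric.) -/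
open Filter Topology

/-! Writing `Δ(h) = a(τ+h) - a(τ)` and `Q(v) = ‖𝐯‖² - (v⁰)²` for the Minkowski form, the exponent
is `-Q(Δ(h))/2`. Since `Q` is continuous and homogeneous of degree two, `Q(Δ(h))/h² = Q(Δ(h)/h)`
tends to `Q(a')`; and since `e^u - 1 ~ u` as `u → 0`, the numerator `2(1 - e^{-Q(Δ(h))/2})` is
asymptotic to `Q(Δ(h))`. -/

theorem Filter.Tendsto.exp_sub_one_div {α : Type*} {l : Filter α} {u s : α → ℝ} {L : ℝ}
    (hu : Tendsto u l (𝓝 0)) (hus : Tendsto (fun x ↦ u x / s x) l (𝓝 L)) :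
    Tendsto (fun x ↦ (Real.exp (u x) - 1) / s x) l (𝓝 L) := by
  have hslope : Tendsto (fun x ↦ dslope Real.exp 0 (u x)) l (𝓝 1) := by
    have hcont : ContinuousAt (dslope Real.exp 0) 0 :=
      continuousAt_dslope_same.mpr Real.differentiableAt_exp
    simpa [Function.comp_def, dslope_same] using hcont.tendsto.comp hu
  refine (one_mul L ▸ hslope.mul hus).congr fun x ↦ ?_
  -- `e^u - 1 = u · dslope exp 0 u` holds also at `u = 0`, where both sides vanish.
  have hexp := sub_smul_dslope Real.exp 0 (u x)
  rw [sub_zero, smul_eq_mul, Real.exp_zero] at hexp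
  rw [← hexp, mul_comm, mul_div_right_comm]

theorem HasDerivAt.tendsto_apply_sub_div_sq {F : Type*} [NormedAddCommGroup F] [NormedSpace ℝ F]
    {Q : F → ℝ} {a : ℝ → F} {a' : F} {τ : ℝ} (ha : HasDerivAt a a' τ) (hQ : ContinuousAt Q a')
    (hQ_smul : ∀ (c : ℝ) (v : F), Q (c • v) = c ^ 2 * Q v) :
    Tendsto (fun h ↦ Q (a (τ + h) - a τ) / h ^ 2) (𝓝[≠] 0) (𝓝 (Q a')) := by
  refine (hQ.tendsto.comp (hasDerivAt_iff_tendsto_slope_zero.mp ha)).congr fun h ↦ ?_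
  simp only [Function.comp_apply, hQ_smul, inv_pow, inv_mul_eq_div]

section MinkowskiForm

variable {E : Type*} [NormedAddCommGroup E]

def minkowskiForm (v : E × ℝ) : ℝ := ‖v.1‖ ^ 2 - v.2 ^ 2

theorem continuous_minkowskiForm : Continuous (minkowskiForm : E × ℝ → ℝ) := by
  unfold minkowskiForm
  fun_prop

@[simp]
theorem minkowskiForm_zero : minkowskiForm (0 : E × ℝ) = 0 := by
  simp [minkowskiForm]

theorem minkowskiForm_smul [NormedSpace ℝ E] (c : ℝ) (v : E × ℝ) :
    minkowskiForm (c • v) = c ^ 2 * minkowskiForm v := by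
  simp only [minkowskiForm, Prod.smul_fst, Prod.smul_snd, norm_smul, smul_eq_mul, mul_pow,
    Real.norm_eq_abs, sq_abs]
  ring

end MinkowskiForm

/-- If `a : ℝ → ℝ³ × ℝ`, `a(τ) = (𝐚(τ), a⁰(τ))`, is differentiable at `τ`,
then `lim_{h→0} 2(1 − e^{-|𝐚(τ+h)−𝐚(τ)|²/2 + (a⁰(τ+h)−a⁰(τ))²/2})/h² = |𝐚'(τ)|² − (a⁰'(τ))²`:
the indefinite metric on the Krein space `H` induces the Minkowski metric of signature
`(+,+,+,−)` on the submanifold `M₄` of delta functions. -/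
theorem induced_metric_is_minkowski
    (a : ℝ → EuclideanSpace ℝ (Fin 3) × ℝ) (τ : ℝ) (a' : EuclideanSpace ℝ (Fin 3) × ℝ)
    (ha : HasDerivAt a a' τ) :
    Tendsto (fun h : ℝ =>
        2 * (1 - Real.exp (-‖(a (τ + h)).1 - (a τ).1‖ ^ 2 / 2 +
          ((a (τ + h)).2 - (a τ).2) ^ 2 / 2)) / h ^ 2)
      (nhdsWithin 0 {(0 : ℝ)}ᶜ) (nhds (‖a'.1‖ ^ 2 - a'.2 ^ 2)) := by
  set u : ℝ → ℝ := fun h ↦ -minkowskiForm (a (τ + h) - a τ) / 2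
  have hquot : Tendsto (fun h ↦ u h / h ^ 2) (𝓝[≠] 0) (𝓝 (-minkowskiForm a' / 2)) := by
    refine ((ha.tendsto_apply_sub_div_sq continuous_minkowskiForm.continuousAt
      minkowskiForm_smul).neg.div_const 2).congr fun h ↦ ?_
    ring
  have hu : Tendsto u (𝓝[≠] 0) (𝓝 0) := by
    have hincr : Tendsto (fun h ↦ a (τ + h) - a τ) (𝓝 0) (𝓝 0) := by
      have hshift : Tendsto (τ + ·) (𝓝 0) (𝓝 τ) := by
        simpa using (continuous_const_add τ).tendsto 0
      simpa using (ha.continuousAt.tendsto.comp hshift).sub_const (a τ)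
    have := ((continuous_minkowskiForm.tendsto 0).comp hincr).neg.div_const 2
    simpa [u] using this.mono_left nhdsWithin_le_nhds
  have hlim := (hu.exp_sub_one_div hquot).const_mul (-2)
  convert hlim using 2 with h
  · simp only [u, minkowskiForm, Prod.fst_sub, Prod.snd_sub]
    ring_nf
  · simp only [minkowskiForm]
    ring
end

section
/- Let V : ℝ³ × ℝ → ℝ be continuous and bounded, and let ψ : ℝ³ × ℝ → ℂ be a Schwartz function on ℝ⁴. Then the following are equivalent: (i) for every Schwartz function χ on ℝ⁴ and every τ ∈ ℝ, d/dτ [∫_{ℝ³} ψ(x,τ) χ(x,τ) dx] = ∫_{ℝ³} ψ(x,τ) (∂χ/∂t)(x,τ) dx − i ∫_{ℝ³} (−Δ_x ψ(x,τ) + V(x,τ)ψ(x,τ)) χ(x,τ) dx; (ii) ψ satisfies the Schrödinger equation ∂ψ/∂t(x,t) = −i(−Δ_x ψ(x,t) + V(x,t)ψ(x,t)) for all (x,t) ∈ ℝ³ × ℝ. (Statement (i) is the weak formulation, obtained by pairing with test functions χ, of the equation dφ_τ/dτ = (−∂/∂t − iĥ)φ_τ for the path φ_τ(x,t) = ψ(x,t)δ(t−τ)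 in H, with Hamiltonian ĥ = −Δ + V.) -/
open MeasureTheory Real

/-- The spatial Laplacian `Δ_x f` of a function `f : ℝ³ × ℝ → ℂ`. -/
noncomputable def spatialLaplacian (f : EuclideanSpace ℝ (Fin 3) × ℝ → ℂ)
    (p : EuclideanSpace ℝ (Fin 3) × ℝ) : ℂ :=
  ∑ i : Fin 3,
    fderiv ℝ (fun q => fderiv ℝ f q (EuclideanSpace.single i 1, (0 : ℝ))) p
      (EuclideanSpace.single i 1, (0 : ℝ))

/-! The pairing `∫ ψ(x,τ) χ(x,τ) dx` is the integral of the slice at `t = τ` of the Schwartz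
function `ψχ`. Schwartz decay in `x` is uniform in `t`, so this can be differentiated under the
integral sign, and the product rule turns (i) into `∫ (∂ₜψ + i ĥψ)(x,τ) χ(x,τ) dx = 0` for all
`χ` and `τ`. Every smooth compactly supported function on `ℝ³` is such a slice of some Schwartz
`χ` (multiply by a bump in `t`), so the fundamental lemma of the calculus of variations and
continuity give `∂ₜψ + i ĥψ = 0`. -/

open scoped ContDiff
open LineDeriv

namespace SchwartzMap

section ProductRule

variable {D A : Type*} [NormedAddCommGroup D] [NormedSpace ℝ D] [NormedCommRing A]
  [NormedAlgebra ℝ A]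

theorem lineDerivOp_pairing_mul_apply (f g : 𝓢(D, A)) (v x : D) :
    ∂_{v} (pairing (.mul ℝ A) f g) x = f x * ∂_{v} g x + ∂_{v} f x * g x := by
  have hprod : HasFDerivAt (fun y ↦ f y * g y) (f x • fderiv ℝ g x + g x • fderiv ℝ f x) x :=
    (f.hasFDerivAt x).mul (g.hasFDerivAt x)
  change fderiv ℝ (fun y ↦ f y * g y) x v = _
  simp [hprod.fderiv, lineDerivOp_apply_eq_fderiv, mul_comm]

end ProductRule

section Slice

variable {E F V A : Type*} [NormedAddCommGroup E] [NormedSpace ℝ E] [MeasurableSpace E]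
  {μ : Measure E} [μ.HasTemperateGrowth] [NormedAddCommGroup F] [NormedSpace ℝ F]
  [NormedAddCommGroup V] [NormedSpace ℝ V]

theorem exists_integrable_bound_apply_mk (f : 𝓢(E × F, V)) :
    ∃ g : E → ℝ, Integrable g μ ∧ ∀ x t, ‖f (x, t)‖ ≤ g x := by
  set l := μ.integrablePower
  refine ⟨fun x ↦ 2 ^ l * (SchwartzMap.seminorm ℝ 0 0 f + SchwartzMap.seminorm ℝ l 0 f) *
    (1 + ‖x‖) ^ (-(l : ℝ)), (Measure.integrable_pow_neg_integrablePower μ).const_mul _,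
    fun x t ↦ ?_⟩
  have hdecay : ‖x‖ ^ (0 + l) * ‖f (x, t)‖ ≤ SchwartzMap.seminorm ℝ l 0 f := by
    grw [zero_add, norm_fst_le (x, t)]
    exact norm_pow_mul_le_seminorm ℝ f l (x, t)
  simpa using pow_mul_le_of_le_of_pow_mul_le (norm_nonneg x) (norm_nonneg _)
    (norm_le_seminorm ℝ f (x, t)) hdecay

variable [BorelSpace E] [SecondCountableTopology E]

theorem integrable_apply_mk (f : 𝓢(E × F, V)) (t : F) : Integrable (fun x ↦ f (x, t)) μ := by
  obtain ⟨g, hg, hfg⟩ := exists_integrable_bound_apply_mk (μ := μ) f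
  exact hg.mono' (by fun_prop) (ae_of_all _ fun x ↦ hfg x t)

theorem hasDerivAt_integral_apply_mk [CompleteSpace V] (f : 𝓢(E × ℝ, V)) (τ : ℝ) :
    HasDerivAt (fun t ↦ ∫ x, f (x, t) ∂μ) (∫ x, ∂_{((0 : E), (1 : ℝ))} f (x, τ) ∂μ) τ := by
  obtain ⟨g, hg, hfg⟩ := exists_integrable_bound_apply_mk (μ := μ) (∂_{((0 : E), (1 : ℝ))} f)
  refine (hasDerivAt_integral_of_dominated_loc_of_deriv_le (bound := g) Filter.univ_mem
    (.of_forall fun t ↦ (integrable_apply_mk f t).aestronglyMeasurable)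
    (integrable_apply_mk f τ) (by fun_prop) (ae_of_all _ fun x t _ ↦ hfg x t) hg
    (ae_of_all _ fun x t _ ↦ ?_)).2
  exact (f.hasFDerivAt (x, t)).comp_hasDerivAt t ((hasDerivAt_const t x).prodMk (hasDerivAt_id t))

variable [NormedCommRing A] [NormedAlgebra ℝ A]

theorem integrable_bdd_mul_apply_mk {w : E × F → A} (hw : Continuous w) {M : ℝ}
    (hM : ∀ p, ‖w p‖ ≤ M) (f : 𝓢(E × F, A)) (t : F) :
    Integrable (fun x ↦ w (x, t) * f (x, t)) μ :=
  (integrable_apply_mk f t).bdd_mul (by fun_prop) (ae_of_all _ fun x ↦ hM (x, t))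

variable [CompleteSpace A]

theorem hasDerivAt_integral_mul_apply_mk (f g : 𝓢(E × ℝ, A)) (τ : ℝ) :
    HasDerivAt (fun t ↦ ∫ x, f (x, t) * g (x, t) ∂μ)
      ((∫ x, f (x, τ) * ∂_{((0 : E), (1 : ℝ))} g (x, τ) ∂μ) +
        ∫ x, ∂_{((0 : E), (1 : ℝ))} f (x, τ) * g (x, τ) ∂μ) τ := by
  have hsplit : ∫ x, ∂_{((0 : E), (1 : ℝ))} (pairing (.mul ℝ A) f g) (x, τ) ∂μ =
      (∫ x, f (x, τ) * ∂_{((0 : E), (1 : ℝ))} g (x, τ) ∂μ) +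
        ∫ x, ∂_{((0 : E), (1 : ℝ))} f (x, τ) * g (x, τ) ∂μ := by
    simp only [lineDerivOp_pairing_mul_apply]
    exact integral_add (integrable_apply_mk (pairing (.mul ℝ A) f _) τ)
      (integrable_apply_mk (pairing (.mul ℝ A) _ g) τ)
  exact hsplit ▸ hasDerivAt_integral_apply_mk (pairing (.mul ℝ A) f g) τ

theorem hasDerivAt_integral_mul_apply_mk_sub_iff (f g : 𝓢(E × ℝ, A)) (τ : ℝ) (c : A) :
    HasDerivAt (fun t ↦ ∫ x, f (x, t) * g (x, t) ∂μ)
      ((∫ x, f (x, τ) * ∂_{((0 : E), (1 : ℝ))} g (x, τ) ∂μ) - c) τ ↔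
      (∫ x, ∂_{((0 : E), (1 : ℝ))} f (x, τ) * g (x, τ) ∂μ) + c = 0 := by
  have hder := hasDerivAt_integral_mul_apply_mk (μ := μ) f g τ
  exact ⟨fun h ↦ by linear_combination -(h.unique hder),
    fun h ↦ hder.congr_deriv (by linear_combination h)⟩

end Slice

section FundamentalLemma

variable {E F 𝕜 : Type*} [NormedAddCommGroup E] [NormedSpace ℝ E] [NormedAddCommGroup F]
  [NormedSpace ℝ F] [FiniteDimensional ℝ F] [RCLike 𝕜]

theorem exists_apply_mk_eq_of_hasCompactSupport {g : E → ℝ} (hg : ContDiff ℝ ∞ g)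
    (hgs : HasCompactSupport g) (t₀ : F) : ∃ χ : 𝓢(E × F, 𝕜), ∀ x, χ (x, t₀) = g x := by
  let b : ContDiffBump t₀ := ⟨1, 2, one_pos, one_lt_two⟩
  let χ : E × F → 𝕜 := fun p ↦ ((g p.1 * b p.2 : ℝ) : 𝕜)
  have hχ : ContDiff ℝ ∞ χ := (RCLike.ofRealCLM : ℝ →L[ℝ] 𝕜).contDiff.comp
    ((hg.comp contDiff_fst).mul (b.contDiff.comp contDiff_snd))
  have hχs : HasCompactSupport χ := by
    refine .intro (hgs.prod b.hasCompactSupport) fun p hp ↦ ?_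
    rcases not_and_or.mp hp with hp | hp <;> simp [χ, image_eq_zero_of_notMem_tsupport hp]
  refine ⟨hχs.toSchwartzMap hχ, fun x ↦ ?_⟩
  simp [χ, b.one_of_mem_closedBall (Metric.mem_closedBall_self b.rIn_pos.le)]

variable [FiniteDimensional ℝ E] [MeasurableSpace E] [BorelSpace E] {μ : Measure E}
  [IsLocallyFiniteMeasure μ] [μ.IsOpenPosMeasure]

theorem forall_integral_mul_apply_mk_eq_zero_iff {u : E → 𝕜} (hu : Continuous u) (t₀ : F) :
    (∀ χ : 𝓢(E × F, 𝕜), ∫ x, u x * χ (x, t₀) ∂μ = 0) ↔ u = 0 := by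
  refine ⟨fun h ↦ (hu.ae_eq_iff_eq μ continuous_const).mp ?_, fun h χ ↦ by simp [h]⟩
  refine ae_eq_zero_of_integral_contDiff_smul_eq_zero hu.locallyIntegrable fun g hg hgs ↦ ?_
  obtain ⟨χ, hχ⟩ := exists_apply_mk_eq_of_hasCompactSupport (𝕜 := 𝕜) hg hgs t₀
  simpa [hχ, RCLike.real_smul_eq_coe_mul, mul_comm] using h χ

end FundamentalLemma

end SchwartzMap

open SchwartzMap

theorem spatialLaplacian_eq_sum_lineDerivOp (f : 𝓢(EuclideanSpace ℝ (Fin 3) × ℝ, ℂ)) :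
    spatialLaplacian f = ⇑(∑ i : Fin 3, ∂_{(EuclideanSpace.single i (1 : ℝ), (0 : ℝ))}
      (∂_{(EuclideanSpace.single i (1 : ℝ), (0 : ℝ))} f) : 𝓢(EuclideanSpace ℝ (Fin 3) × ℝ, ℂ)) := by
  ext p
  simp only [spatialLaplacian, sum_apply]
  rfl

/-- For `V : ℝ³ × ℝ → ℝ` continuous and bounded and `ψ` a Schwartz function
on `ℝ⁴`, the following are equivalent: (i) for every Schwartz test function `χ` and every
`τ`, `d/dτ ∫ ψ(x,τ)χ(x,τ) dx = ∫ ψ(x,τ) ∂χ/∂t(x,τ) dx − i∫ (−Δ_xψ + Vψ)(x,τ) χ(x,τ) dx`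
(the weak form of `dφ_τ/dτ = (−∂/∂t − iĥ)φ_τ` for the path `φ_τ = ψ δ(t−τ)` in `H`);
(ii) `ψ` satisfies the Schrödinger equation `∂ψ/∂t = −i(−Δ_xψ + Vψ)` everywhere. -/
theorem weak_delta_path_equation_iff_schrodinger
    (V : EuclideanSpace ℝ (Fin 3) × ℝ → ℝ) (hVc : Continuous V)
    (hVb : ∃ M : ℝ, ∀ p, |V p| ≤ M)
    (ψ : SchwartzMap (EuclideanSpace ℝ (Fin 3) × ℝ) ℂ) :
    (∀ (χ : SchwartzMap (EuclideanSpace ℝ (Fin 3) × ℝ) ℂ) (τ : ℝ),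
      HasDerivAt (fun σ : ℝ => ∫ x : EuclideanSpace ℝ (Fin 3), ψ (x, σ) * χ (x, σ))
        ((∫ x : EuclideanSpace ℝ (Fin 3),
            ψ (x, τ) * fderiv ℝ (⇑χ) (x, τ) ((0 : EuclideanSpace ℝ (Fin 3)), (1 : ℝ)))
          - Complex.I * ∫ x : EuclideanSpace ℝ (Fin 3),
              (-(spatialLaplacian (⇑ψ) (x, τ)) + (V (x, τ) : ℂ) * ψ (x, τ)) * χ (x, τ)) τ)
    ↔
    (∀ p : EuclideanSpace ℝ (Fin 3) × ℝ,
      fderiv ℝ (⇑ψ) p ((0 : EuclideanSpace ℝ (Fin 3)), (1 : ℝ))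
        = -Complex.I * (-(spatialLaplacian (⇑ψ) p) + (V p : ℂ) * ψ p)) := by
  obtain ⟨M, hM⟩ := hVb
  obtain ⟨Δψ, hΔψ⟩ : ∃ Δψ : 𝓢(EuclideanSpace ℝ (Fin 3) × ℝ, ℂ), spatialLaplacian ψ = Δψ :=
    ⟨_, spatialLaplacian_eq_sum_lineDerivOp ψ⟩
  simp only [hΔψ, ← lineDerivOp_apply_eq_fderiv]
  set ψ' := ∂_{((0 : EuclideanSpace ℝ (Fin 3)), (1 : ℝ))} ψ
  set H : EuclideanSpace ℝ (Fin 3) × ℝ → ℂ := fun p ↦ -Δψ p + (V p : ℂ) * ψ p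
  have hH_int (χ : 𝓢(EuclideanSpace ℝ (Fin 3) × ℝ, ℂ)) (τ : ℝ) :
      Integrable (fun x ↦ H (x, τ) * χ (x, τ)) := by
    have hVψχ := integrable_bdd_mul_apply_mk (μ := volume) (w := fun p ↦ (V p : ℂ))
      (by fun_prop) (fun p ↦ by simpa using hM p) (pairing (.mul ℝ ℂ) ψ χ) τ
    refine ((integrable_apply_mk (pairing (.mul ℝ ℂ) Δψ χ) τ).neg.add hVψχ).congr
      (ae_of_all _ fun x ↦ ?_)
    simp only [H, Pi.add_apply, Pi.neg_apply, pairing_apply_apply, ContinuousLinearMap.mul_apply']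
    ring
  have hweak (χ : 𝓢(EuclideanSpace ℝ (Fin 3) × ℝ, ℂ)) (τ : ℝ) :
      HasDerivAt (fun σ ↦ ∫ x, ψ (x, σ) * χ (x, σ))
        ((∫ x, ψ (x, τ) * ∂_{((0 : EuclideanSpace ℝ (Fin 3)), (1 : ℝ))} χ (x, τ)) -
          Complex.I * ∫ x, H (x, τ) * χ (x, τ)) τ ↔
      ∫ x, (ψ' (x, τ) + Complex.I * H (x, τ)) * χ (x, τ) = 0 := by
    have hψ'χ : Integrable (fun x ↦ ψ' (x, τ) * χ (x, τ)) :=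
      integrable_apply_mk (pairing (.mul ℝ ℂ) ψ' χ) τ
    rw [hasDerivAt_integral_mul_apply_mk_sub_iff, ← integral_const_mul,
      ← integral_add hψ'χ ((hH_int χ τ).const_mul Complex.I)]
    simp only [add_mul, mul_assoc]
  refine (forall₂_congr hweak).trans ?_
  rw [forall_comm]
  refine (forall_congr' fun τ ↦ forall_integral_mul_apply_mk_eq_zero_iff (by fun_prop) τ).trans ?_
  simp only [funext_iff, Pi.zero_apply, add_eq_zero_iff_eq_neg, neg_mul, Prod.forall, H]
  exact forall_comm
end

section
/- Let p = k + l with k, l ≥ 0, and let η be the symmetric bilinear form on ℝ^p with η(u, v) = Σ_{r=1}^{k} u_r v_r − Σ_{r=k+1}^{p} u_r v_r. Let U ⊆ ℝⁿ be open and X : U → ℝ^p be twice continuously differentiable, and define K : U × U → ℝ by K(u, v) = exp(−(1/2) η(X(u) − X(v), X(u) − X(v))). Then for every u ∈ U and all indices μ, ν ∈ {1, …, n}, the mixed partial derivative satisfies ∂²K/∂u^μ ∂v^ν evaluated at v = u equals η(∂X/∂u^μ (u), ∂X/∂u^ν (u)) = Σ_{r=1}^{k} ∂X^r/∂u^μ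 ∂X^r/∂u^ν − Σ_{r=k+1}^{p} ∂X^r/∂u^μ ∂X^r/∂u^ν, i.e., it equals the pullback metric g_{μν}(u) = η_{rs} ∂X^r/∂u^μ ∂X^s/∂u^ν. -/
open MeasureTheory Real

/-- The flat symmetric bilinear form of signature `(k, l)` on `ℝ^p` (`p = k + l`):
`η(u, v) = Σ_{r<k} u_r v_r − Σ_{r≥k} u_r v_r`. -/
def etaForm (k : ℕ) {p : ℕ} (u v : EuclideanSpace ℝ (Fin p)) : ℝ :=
  ∑ r : Fin p, (if (r : ℕ) < k then (1 : ℝ) else -1) * u r * v r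

/-- The Gaussian-type kernel `K(u, v) = exp(−(1/2) η(X(u) − X(v), X(u) − X(v)))` built from
a map `X : U → ℝ^p` into flat pseudo-Euclidean space of signature `(k, l)`. -/
noncomputable def kernelK (k : ℕ) {n p : ℕ}
    (X : EuclideanSpace ℝ (Fin n) → EuclideanSpace ℝ (Fin p))
    (u v : EuclideanSpace ℝ (Fin n)) : ℝ :=
  Real.exp (-(1 / 2) * etaForm k (X u - X v) (X u - X v))

/-!
For a continuous bilinear form `B` put `K(w, z) = exp(-½ B(Xw - Xz, Xw - Xz))`. Differentiating
in `z` at `u` in direction `e'` gives `½ K(w, u) (B(Xw - Xu, X'e') + B(X'e', Xw - Xu))`. The second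
factor vanishes at `w = u`, where `K = 1`, so differentiating in `w` at `u` only sees its
derivative: the mixed partial is the symmetrisation `½ (B(X'e, X'e') + B(X'e', X'e))`, which is
`η(X'e, X'e')` because `η` is symmetric.
-/

open ContinuousLinearMap

section ExpQuadKernel

variable {E F : Type*} [NormedAddCommGroup E] [NormedSpace ℝ E]
  [NormedAddCommGroup F] [NormedSpace ℝ F]

noncomputable def expQuadKernel (B : F →L[ℝ] F →L[ℝ] ℝ) (X : E → F) (w z : E) : ℝ :=
  Real.exp (-(1 / 2) * B (X w - X z) (X w - X z))

variable {B : F →L[ℝ] F →L[ℝ] ℝ} {X : E → F} {X' : E →L[ℝ] F} {u : E}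

theorem fderiv_expQuadKernel_right (hX : HasFDerivAt X X' u) (w e : E) :
    fderiv ℝ (expQuadKernel B X w) u e =
      1 / 2 * expQuadKernel B X w u * (B (X w - X u) (X' e) + B (X' e) (X w - X u)) := by
  have hdiff : HasFDerivAt (fun z => X w - X z) (-X') u := hX.const_sub (X w)
  have hK : HasFDerivAt (expQuadKernel B X w) _ u :=
    ((B.hasFDerivAt_of_bilinear hdiff hdiff).const_mul (-(1 / 2 : ℝ))).exp
  rw [hK.fderiv]
  simp only [smul_apply, precompR_apply, precompL_apply, compL_apply, comp_apply,
    neg_apply, map_neg, add_apply, smul_eq_mul, expQuadKernel]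
  ring

theorem fderiv_expQuadKernel_mul_polarization (hX : HasFDerivAt X X' u) (a : F) (e : E) :
    fderiv ℝ (fun w => 1 / 2 * expQuadKernel B X w u * (B (X w - X u) a + B a (X w - X u))) u e =
      1 / 2 * (B (X' e) a + B a (X' e)) := by
  have hdiff : HasFDerivAt (fun w => X w - X u) X' u := hX.sub_const (X u)
  have hK : HasFDerivAt (fun w => 1 / 2 * expQuadKernel B X w u) _ u :=
    ((B.hasFDerivAt_of_bilinear hdiff hdiff).const_mul (-(1 / 2 : ℝ))).exp.const_mul (1 / 2)
  have hpol := (B.hasFDerivAt_of_bilinear hdiff (hasFDerivAt_const a u)).fun_add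
    (B.hasFDerivAt_of_bilinear (hasFDerivAt_const a u) hdiff)
  rw [(hK.fun_mul hpol).fderiv]
  simp [expQuadKernel, mul_add]

theorem fderiv_fderiv_expQuadKernel_diag (hX : HasFDerivAt X X' u) (e e' : E) :
    fderiv ℝ (fun w => fderiv ℝ (expQuadKernel B X w) u e') u e =
      1 / 2 * (B (X' e) (X' e') + B (X' e') (X' e)) := by
  simp_rw [fderiv_expQuadKernel_right hX]
  exact fderiv_expQuadKernel_mul_polarization hX _ e

end ExpQuadKernel

noncomputable def etaBilin (k p : ℕ) :
    EuclideanSpace ℝ (Fin p) →L[ℝ] EuclideanSpace ℝ (Fin p) →L[ℝ] ℝ :=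
  ∑ r : Fin p, (if (r : ℕ) < k then (1 : ℝ) else -1) •
    (mul ℝ ℝ).bilinearComp (EuclideanSpace.proj r) (EuclideanSpace.proj r)

theorem etaBilin_apply (k : ℕ) {p : ℕ} (x y : EuclideanSpace ℝ (Fin p)) :
    etaBilin k p x y = etaForm k x y := by
  simp only [etaBilin, etaForm, sum_apply, smul_apply, bilinearComp_apply, mul_apply',
    PiLp.proj_apply, smul_eq_mul, mul_assoc]

theorem etaForm_comm (k : ℕ) {p : ℕ} (x y : EuclideanSpace ℝ (Fin p)) :
    etaForm k x y = etaForm k y x := by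
  simp only [etaForm, mul_right_comm]

theorem kernelK_eq_expQuadKernel (k : ℕ) {n p : ℕ}
    (X : EuclideanSpace ℝ (Fin n) → EuclideanSpace ℝ (Fin p)) :
    kernelK k X = expQuadKernel (etaBilin k p) X := by
  ext w z
  rw [kernelK, expQuadKernel, etaBilin_apply]

theorem mixed_partial_of_kernel_is_pullback_metric_general
    (n k p : ℕ)
    (U : Set (EuclideanSpace ℝ (Fin n))) (hU : IsOpen U)
    (X : EuclideanSpace ℝ (Fin n) → EuclideanSpace ℝ (Fin p))
    (hX : ContDiffOn ℝ 2 X U) :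
    ∀ u ∈ U, ∀ μ ν : Fin n,
      fderiv ℝ (fun w => fderiv ℝ (fun z => kernelK k X w z) u (EuclideanSpace.single ν 1)) u
          (EuclideanSpace.single μ 1)
        = etaForm k (fderiv ℝ X u (EuclideanSpace.single μ 1))
            (fderiv ℝ X u (EuclideanSpace.single ν 1)) ∧
      etaForm k (fderiv ℝ X u (EuclideanSpace.single μ 1))
          (fderiv ℝ X u (EuclideanSpace.single ν 1))
        = (∑ r : Fin p, (if (r : ℕ) < k then (1 : ℝ) else -1) *
            fderiv ℝ X u (EuclideanSpace.single μ 1) r *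
            fderiv ℝ X u (EuclideanSpace.single ν 1) r) := by
  intro u hu μ ν
  refine ⟨?_, rfl⟩
  have hXu : HasFDerivAt X (fderiv ℝ X u) u :=
    ((hX.contDiffAt (hU.mem_nhds hu)).differentiableAt two_ne_zero).hasFDerivAt
  rw [kernelK_eq_expQuadKernel, fderiv_fderiv_expQuadKernel_diag hXu, etaBilin_apply,
    etaBilin_apply, etaForm_comm k (fderiv ℝ X u _)]
  ring

/-- Let `p = k + l`, `U ⊆ ℝⁿ` open, and `X : U → ℝ^p` twice continuously
differentiable. Then for every `u ∈ U` and all `μ, ν`, the mixed partial derivative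
`∂²K/∂u^μ∂v^ν` of `K(u,v) = exp(−½ η(X(u)−X(v), X(u)−X(v)))`, evaluated at `v = u`, equals
the pullback metric `g_{μν}(u) = η(∂X/∂u^μ, ∂X/∂u^ν) = Σ_{r<k} ∂_μX^r ∂_νX^r − Σ_{r≥k} ∂_μX^r ∂_νX^r`. -/
theorem mixed_partial_of_kernel_is_pullback_metric
    (n k l p : ℕ) (hp : p = k + l)
    (U : Set (EuclideanSpace ℝ (Fin n))) (hU : IsOpen U)
    (X : EuclideanSpace ℝ (Fin n) → EuclideanSpace ℝ (Fin p))
    (hX : ContDiffOn ℝ 2 X U) :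
    ∀ u ∈ U, ∀ μ ν : Fin n,
      fderiv ℝ (fun w => fderiv ℝ (fun z => kernelK k X w z) u (EuclideanSpace.single ν 1)) u
          (EuclideanSpace.single μ 1)
        = etaForm k (fderiv ℝ X u (EuclideanSpace.single μ 1))
            (fderiv ℝ X u (EuclideanSpace.single ν 1)) ∧
      etaForm k (fderiv ℝ X u (EuclideanSpace.single μ 1))
          (fderiv ℝ X u (EuclideanSpace.single ν 1))
        = (∑ r : Fin p, (if (r : ℕ) < k then (1 : ℝ) else -1) *
            fderiv ℝ X u (EuclideanSpace.single μ 1) r *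
            fderiv ℝ X u (EuclideanSpace.single ν 1) r) :=
  mixed_partial_of_kernel_is_pullback_metric_general n k p U hU X hX
end
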